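/- arXiv:1806.02970 — 2 statements merged into one kernel-verified Lean document; each statement's English description precedes it below -/
import Mathlib

section
/- Let R be a finite set of n items with preference scores θ : R → ℝ satisfying 1/C ≤ θ_a ≤ 1 for all a ∈ R, where C ≥ 1 is a constant, and let 2 ≤ l ≤ n. For an item x ∈ R define P(x) := (1/binom(n,l)) · Σ_{S ⊆ R, |S| = l, x ∈ S} θ_x / (Σ_{a ∈ S} θ_a), i.e., the probability that x wins a query over a uniformly random l-sized subset of R under the MNL model. Then for any items i, j ∈ R with θ_i > θ_j and any real α with 0 < α ≤ (l−1)/(4(l+C−1)), it holds that P(i)/(P(i)+P(j)) ≥ 1/2 + α(θ_i − θ_j). -/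
/-!
Swapping `i` and `j` maps the `l`-subsets containing `i` bijectively onto those containing `j`, so
`P i ± P j` is a sum over the subsets `S ∋ i` of the winning probability of `i` in `S` plus or minus
that of `j` in the image of `S`. For each `S` these two probabilities differ by at least
`2α(θ_i - θ_j)` times their sum: if `j ∈ S` both queries have the same total score, otherwise the
totals are `R + θ_i` and `R + θ_j`, with `R` the score of `S ∖ {i}`. Both cases need only
`4α(R + 1) ≤ R`, which the RBC condition gives through `R ≥ (l - 1)/C`.
-/

open Finset Equiv

section PairMargin

variable {a b R α : ℝ}

theorem pair_margin_of_common_total (hα : 0 ≤ α) (hba : b ≤ a) (ha : a ≤ 1)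
    (hRa : 0 < R + a) (h : 4 * α * (R + 1) ≤ R) :
    2 * α * (a - b) * (a / (R + a) + b / (R + a)) ≤ a / (R + a) - b / (R + a) := by
  rw [← add_div, ← sub_div, ← mul_div_assoc]
  refine div_le_div_of_nonneg_right ?_ hRa.le
  have h4α : 4 * α ≤ 1 := by nlinarith
  nlinarith [mul_nonneg hα (sub_nonneg.2 hba)]

theorem pair_margin_of_swapped_total (hα : 0 ≤ α) (hb : 0 < b) (hba : b ≤ a) (ha : a ≤ 1)
    (hR : 0 ≤ R) (h : 4 * α * (R + 1) ≤ R) :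
    2 * α * (a - b) * (a / (R + a) + b / (R + b)) ≤ a / (R + a) - b / (R + b) := by
  have hRa : 0 < R + a := by linarith
  have hRb : 0 < R + b := by linarith
  rw [div_add_div _ _ hRa.ne' hRb.ne', div_sub_div _ _ hRa.ne' hRb.ne', ← mul_div_assoc]
  refine div_le_div_of_nonneg_right ?_ (mul_pos hRa hRb).le
  have hsum : a * (R + b) + (R + a) * b ≤ 2 * (R + 1) := by nlinarith
  have hd : 0 ≤ 2 * α * (a - b) := by nlinarith
  calc 2 * α * (a - b) * (a * (R + b) + (R + a) * b)
      ≤ 2 * α * (a - b) * (2 * (R + 1)) := mul_le_mul_of_nonneg_left hsum hd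
    _ = (a - b) * (4 * α * (R + 1)) := by ring
    _ ≤ (a - b) * R := mul_le_mul_of_nonneg_left h (by linarith)
    _ = a * (R + b) - (R + a) * b := by ring

end PairMargin

theorem four_mul_add_one_le_of_div_le {m C R α : ℝ} (hm : 0 ≤ m) (hC : 0 < C)
    (hR : m / C ≤ R) (hα : α ≤ m / (4 * (m + C))) : 4 * α * (R + 1) ≤ R := by
  have hmR : m ≤ C * R := by rwa [div_le_iff₀' hC] at hR
  have hα' : 4 * α * (m + C) ≤ m := by
    rw [le_div_iff₀ (by positivity)] at hα
    linarith
  have hR0 : 0 ≤ R := (div_nonneg hm hC.le).trans hR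
  have key : 4 * α * (R + 1) * (m + C) ≤ R * (m + C) := by nlinarith
  exact le_of_mul_le_mul_right key (by positivity)

theorem le_div_add_of_two_mul_mul_add_le {x y c : ℝ} (hxy : 0 < x + y)
    (h : 2 * c * (x + y) ≤ x - y) : 1 / 2 + c ≤ x / (x + y) := by
  rw [le_div_iff₀ hxy]
  linarith

section Swap

variable {ι : Type*} [DecidableEq ι] (θ : ι → ℝ) {S : Finset ι} {i j : ι}

theorem sum_comp_swap_of_mem_of_mem (hi : i ∈ S) (hj : j ∈ S) :
    ∑ a ∈ S, θ (swap i j a) = ∑ a ∈ S, θ a :=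
  Perm.sum_comp _ _ _ fun a ha => by
    by_contra haS
    exact ha (swap_apply_of_ne_of_ne (ne_of_mem_of_not_mem hi haS).symm
      (ne_of_mem_of_not_mem hj haS).symm)

theorem sum_comp_swap_of_notMem (hi : i ∈ S) (hj : j ∉ S) :
    ∑ a ∈ S, θ (swap i j a) = θ j + ∑ a ∈ S.erase i, θ a := by
  rw [← add_sum_erase S _ hi, swap_apply_left]
  congr 1
  refine sum_congr rfl fun a ha => ?_
  exact congrArg θ <|
    swap_apply_of_ne_of_ne (ne_of_mem_erase ha) (ne_of_mem_of_not_mem (mem_of_mem_erase ha) hj)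

theorem sum_filter_mem_powersetCard_swap [Fintype ι] {M : Type*} [AddCommMonoid M]
    (l : ℕ) (i j : ι) (g : Finset ι → M) :
    ∑ S ∈ (univ.powersetCard l).filter (j ∈ ·), g S =
      ∑ S ∈ (univ.powersetCard l).filter (i ∈ ·), g (S.map (swap i j).toEmbedding) := by
  refine (sum_equiv (swap i j).finsetCongr (fun S => ?_) fun S _ => rfl).symm
  simp [finsetCongr_apply]

theorem pair_margin_swap (hθ : ∀ a, 0 < θ a) (hθi : θ i ≤ 1) (hij : θ j ≤ θ i) {α : ℝ}
    (hα : 0 ≤ α) (hi : i ∈ S)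
    (h : 4 * α * (∑ a ∈ S.erase i, θ a + 1) ≤ ∑ a ∈ S.erase i, θ a) :
    2 * α * (θ i - θ j) * (θ i / ∑ a ∈ S, θ a + θ j / ∑ a ∈ S, θ (swap i j a)) ≤
      θ i / ∑ a ∈ S, θ a - θ j / ∑ a ∈ S, θ (swap i j a) := by
  have hR : 0 ≤ ∑ a ∈ S.erase i, θ a := sum_nonneg fun a _ => (hθ a).le
  by_cases hj : j ∈ S
  · rw [sum_comp_swap_of_mem_of_mem θ hi hj, ← add_sum_erase S θ hi, add_comm (θ i)]
    exact pair_margin_of_common_total hα hij hθi (by linarith [hθ i]) h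
  · rw [sum_comp_swap_of_notMem θ hi hj, ← add_sum_erase S θ hi, add_comm (θ i), add_comm (θ j)]
    exact pair_margin_of_swapped_total hα (hθ j) hij hθi hR h

theorem four_mul_sum_erase_add_one_le {C α : ℝ} {l : ℕ} (hC : 0 < C) (hθ : ∀ a, 1 / C ≤ θ a)
    (hl : 1 ≤ l) (hS : S.card = l) (hi : i ∈ S)
    (hα : α ≤ ((l : ℝ) - 1) / (4 * ((l : ℝ) + C - 1))) :
    4 * α * (∑ a ∈ S.erase i, θ a + 1) ≤ ∑ a ∈ S.erase i, θ a := by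
  have hcard : ((S.erase i).card : ℝ) = (l : ℝ) - 1 := by
    rw [card_erase_of_mem hi, hS, Nat.cast_sub hl, Nat.cast_one]
  refine four_mul_add_one_le_of_div_le (m := (l : ℝ) - 1) (by simpa using hl) hC ?_
    (by rwa [sub_add_eq_add_sub])
  have := card_nsmul_le_sum (S.erase i) θ (1 / C) fun a _ => hθ a
  rwa [nsmul_eq_mul, hcard, ← div_eq_mul_one_div] at this

end Swap

theorem exists_card_eq_mem {ι : Type*} [Fintype ι] (i : ι) {l : ℕ} (hl : 1 ≤ l)
    (hlι : l ≤ Fintype.card ι) : ∃ S : Finset ι, S.card = l ∧ i ∈ S := by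
  obtain ⟨S, hiS, -, hS⟩ := exists_subsuperset_card_eq (subset_univ {i}) (by simpa) (by simpa)
  exact ⟨S, hS, hiS (mem_singleton_self i)⟩

open Finset in
/-- Lemma 1: for a uniformly random `l`-sized query from `R`,
the probability that `i` wins given that `i` or `j` wins is at least
`1/2 + α(θ_i − θ_j)` whenever `α ≤ (l−1)/(4(l+C−1))`. -/
theorem stmt_0 {ι : Type*} [Fintype ι] [DecidableEq ι]
    (n l : ℕ) (hn : Fintype.card ι = n) (hl2 : 2 ≤ l) (hln : l ≤ n)
    (C : ℝ) (hC : 1 ≤ C) (θ : ι → ℝ) (hθ : ∀ a, 1 / C ≤ θ a ∧ θ a ≤ 1)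
    (P : ι → ℝ)
    (hP : ∀ x, P x = (1 / (n.choose l : ℝ)) *
        ∑ S ∈ (Finset.univ.powersetCard l).filter (fun S => x ∈ S),
          θ x / ∑ a ∈ S, θ a)
    (i j : ι) (hij : θ j < θ i)
    (α : ℝ) (hα0 : 0 < α) (hα : α ≤ ((l : ℝ) - 1) / (4 * ((l : ℝ) + C - 1))) :
    P i / (P i + P j) ≥ 1 / 2 + α * (θ i - θ j) := by
  have hC0 : 0 < C := by linarith
  have hθpos : ∀ a, 0 < θ a := fun a => (one_div_pos.2 hC0).trans_le (hθ a).1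
  have hl1 : 1 ≤ l := by omega
  have hmem : ∀ (x : ι) (S : Finset ι),
      S ∈ (univ.powersetCard l).filter (x ∈ ·) ↔ S.card = l ∧ x ∈ S := by simp
  set A := ∑ S ∈ (univ.powersetCard l).filter (i ∈ ·), θ i / ∑ a ∈ S, θ a
  set B := ∑ S ∈ (univ.powersetCard l).filter (j ∈ ·), θ j / ∑ a ∈ S, θ a
  have hmargin : 2 * (α * (θ i - θ j)) * (A + B) ≤ A - B := by
    simp only [A, B, sum_filter_mem_powersetCard_swap l i j, sum_map, mul_sum, ← sum_add_distrib,
      ← sum_sub_distrib]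
    refine sum_le_sum fun S hS => ?_
    obtain ⟨hS, hi⟩ := (hmem i S).1 hS
    rw [← mul_assoc]
    exact pair_margin_swap θ hθpos (hθ i).2 hij.le hα0.le hi
      (four_mul_sum_erase_add_one_le θ hC0 (fun a => (hθ a).1) hl1 hS hi hα)
  have hA : 0 < A := by
    obtain ⟨S, hS, hi⟩ := exists_card_eq_mem i hl1 (hn ▸ hln)
    refine sum_pos (fun S hS => div_pos (hθpos i) ?_) ⟨S, (hmem i S).2 ⟨hS, hi⟩⟩
    exact sum_pos (fun a _ => hθpos a) ⟨i, ((hmem i S).1 hS).2⟩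
  have hB : 0 ≤ B :=
    sum_nonneg fun S _ => div_nonneg (hθpos j).le (sum_nonneg fun a _ => (hθpos a).le)
  have hk : (0 : ℝ) < 1 / (n.choose l : ℝ) := by
    have := Nat.choose_pos hln
    positivity
  rw [hP i, hP j, ← mul_add, mul_div_mul_left _ _ hk.ne', ge_iff_le]
  exact le_div_add_of_two_mul_mul_add_le (by linarith) hmargin
end

section
/- Let l ≥ 2 be an integer, C ≥ 1 a real constant, and let θ_i, θ_j, β be real numbers with 0 < θ_j < θ_i ≤ 1 and β ≥ (l−1)/C. Then (θ_i/(θ_i+β)) / (θ_i/(θ_i+β) + θ_j/(θ_j+β)) ≥ 1/2 + (l−1)(θ_i−θ_j)/(4(l−1+C)). -/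
/-!
Writing `p = a / (a + β)` and `q = b / (b + β)`, the excess of `p / (p + q)` over `1/2` is
`β (a - b) / (2 (2ab + β (a + b)))`. For `a, b ≤ 1` the denominator is at most `4 (1 + β)`,
and `β / (1 + β)` is increasing in `β`, so `β ≥ (l - 1) / C` gives
`β / (1 + β) ≥ (l - 1) / (l - 1 + C)`.
-/

lemma div_div_add_sub_half {a b β : ℝ} (ha : 0 < a) (hb : 0 < b) (hβ : 0 ≤ β) :
    (a / (a + β)) / (a / (a + β) + b / (b + β)) - 1 / 2 =
      β * (a - b) / (2 * (2 * a * b + β * (a + b))) := by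
  have hD : 0 < 2 * a * b + β * (a + b) := by positivity
  field_simp
  ring

lemma two_mul_mul_add_mul_add_le {a b β : ℝ} (ha₀ : 0 ≤ a) (ha : a ≤ 1) (hb : b ≤ 1)
    (hβ : 0 ≤ β) : 2 * a * b + β * (a + b) ≤ 2 * (1 + β) := by
  nlinarith [mul_le_of_le_one_right ha₀ hb]

lemma div_add_le_div_one_add {L C β : ℝ} (hL : 0 ≤ L) (hC : 0 < C) (h : L / C ≤ β) :
    L / (L + C) ≤ β / (1 + β) := by
  have hβ : 0 ≤ β := (div_nonneg hL hC.le).trans h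
  rw [div_le_iff₀ hC] at h
  rw [div_le_div_iff₀ (by positivity) (by positivity)]
  nlinarith

lemma half_add_le_div_div_add {a b β : ℝ} (hb : 0 < b) (hba : b ≤ a) (ha : a ≤ 1)
    (hβ : 0 ≤ β) :
    1 / 2 + β / (1 + β) * (a - b) / 4 ≤ (a / (a + β)) / (a / (a + β) + b / (b + β)) := by
  have ha₀ : 0 < a := hb.trans_le hba
  have hD_le := two_mul_mul_add_mul_add_le ha₀.le ha (hba.trans ha) hβ
  rw [← le_sub_iff_add_le', div_div_add_sub_half ha₀ hb hβ, div_mul_eq_mul_div, div_div,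
    div_le_div_iff₀ (by positivity) (by positivity)]
  nlinarith [mul_le_mul_of_nonneg_left hD_le (mul_nonneg hβ (sub_nonneg.mpr hba))]

/-- the key single-set inequality in the proof of Lemma 1. -/
theorem stmt_1 (l : ℕ) (hl : 2 ≤ l) (C θi θj β : ℝ) (hC : 1 ≤ C)
    (hθj : 0 < θj) (hij : θj < θi) (hθi : θi ≤ 1)
    (hβ : ((l : ℝ) - 1) / C ≤ β) :
    (θi / (θi + β)) / (θi / (θi + β) + θj / (θj + β)) ≥
      1 / 2 + ((l : ℝ) - 1) * (θi - θj) / (4 * ((l : ℝ) - 1 + C)) := by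
  have hl₁ : (0 : ℝ) ≤ l - 1 := sub_nonneg.mpr (by exact_mod_cast (by omega : 1 ≤ l))
  have hC₀ : 0 < C := by linarith
  have hβ₀ : 0 ≤ β := (div_nonneg hl₁ hC₀.le).trans hβ
  refine le_trans ?_ (half_add_le_div_div_add hθj hij.le hθi hβ₀)
  calc 1 / 2 + ((l : ℝ) - 1) * (θi - θj) / (4 * ((l : ℝ) - 1 + C))
      = 1 / 2 + ((l : ℝ) - 1) / ((l : ℝ) - 1 + C) * (θi - θj) / 4 := by
        rw [mul_comm (4 : ℝ), ← div_div, div_mul_eq_mul_div]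
    _ ≤ 1 / 2 + β / (1 + β) * (θi - θj) / 4 := by
        gcongr 1 / 2 + ?_ * _ / 4
        exact div_add_le_div_one_add hl₁ hC₀ hβ
end
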